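/- Let p ≥ 2 and set a = √(p²−p+1)/(2√(p−1)). Define r : {(ξ,y) : ξ ≠ 0} → ℝ³ by r₁ = (1/√(3(p−1)))·(√(p²−p+1)·coth(a ξ) + 1)·e^{−ξ/(2√(p−1)) + (2p−1)y/(2√(3(p−1)))}, r₂ = (1/√(3(p−1)))·(√(p²−p+1)·coth(a ξ) + (p−1))·e^{−(√(p−1)/2)ξ − (p+1)y/(2√(3(p−1)))}, r₃ = −(1/(√3 p))·(√(p²−p+1)·coth(a ξ) − p)·e^{(p/(2√(p−1)))ξ − (p−2)y/(2√(3(p−1)))}. Then each component satisfies ∂²r/∂ξ² + ∂²r/∂y² = ((p²−p+1)/(2(p−1)))·(coth²(a ξ) − 1/3)·r for all ξ ≠ 0, y ∈ ℝ. -/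

import Mathlib

/-!
Every component of `r` has the form `C (K coth(a ξ) + b) e^{α ξ + β y}`. With `u = coth(a ξ)`,
`u' = a (1 - u²)`, the relation `K α = -a b` turns the cross term `2 α K u'` of `∂²/∂ξ²` into
`-2a²b (1 - u²)`, so that `∂²/∂ξ²` multiplies the mode by `α² - 2a² (1 - u²)`; the `y`-derivatives
contribute `β²`, and `α² + β² = 4a²/3` turns the sum into `2a² (u² - 1/3)`, where
`2a² = (p²-p+1)/(2(p-1))`.
-/

/-- Real hyperbolic cotangent. -/
noncomputable def coth (x : ℝ) : ℝ := Real.cosh x / Real.sinh x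

/-- The isothermal parametrization (case `c = −2(p+q)`, `s = 1`) of the complete
hyperbolic affine sphere asymptotic to the cone
`{x : 0 ≤ x₂ ≤ x₁^{1/p} x₃^{1/q}}` (case 5 of Hildebrand's classification);
here `a = √(p²−p+1)/(2√(p−1))`. -/
noncomputable def r (p a ξ y : ℝ) : Fin 3 → ℝ :=
  ![ (1 / Real.sqrt (3 * (p - 1))) * (Real.sqrt (p ^ 2 - p + 1) * coth (a * ξ) + 1) *
       Real.exp (-ξ / (2 * Real.sqrt (p - 1)) +
         (2 * p - 1) * y / (2 * Real.sqrt (3 * (p - 1)))),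
     (1 / Real.sqrt (3 * (p - 1))) * (Real.sqrt (p ^ 2 - p + 1) * coth (a * ξ) + (p - 1)) *
       Real.exp (-(Real.sqrt (p - 1) / 2) * ξ -
         (p + 1) * y / (2 * Real.sqrt (3 * (p - 1)))),
     -(1 / (Real.sqrt 3 * p)) * (Real.sqrt (p ^ 2 - p + 1) * coth (a * ξ) - p) *
       Real.exp ((p / (2 * Real.sqrt (p - 1))) * ξ -
         (p - 2) * y / (2 * Real.sqrt (3 * (p - 1)))) ]

open Real Filter Topology

theorem hasDerivAt_coth {x : ℝ} (hx : x ≠ 0) : HasDerivAt coth (1 - coth x ^ 2) x := by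
  have hs : sinh x ≠ 0 := sinh_ne_zero.mpr hx
  refine ((hasDerivAt_cosh x).div (hasDerivAt_sinh x) hs).congr_deriv ?_
  rw [coth, div_pow, one_sub_div (pow_ne_zero 2 hs)]
  ring

theorem hasDerivAt_coth_const_mul (a : ℝ) {x : ℝ} (hx : a * x ≠ 0) :
    HasDerivAt (fun s => coth (a * s)) (a * (1 - coth (a * x) ^ 2)) x := by
  have h := (hasDerivAt_coth hx).comp x ((hasDerivAt_id x).const_mul a)
  rwa [mul_one, mul_comm] at h

theorem deriv_const_mul_exp_add_mul (c γ β : ℝ) :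
    deriv (fun s => c * exp (γ + β * s)) = fun s => β * c * exp (γ + β * s) := by
  funext s
  have h : HasDerivAt (fun s => γ + β * s) β s := by
    simpa using ((hasDerivAt_id s).const_mul β).const_add γ
  rw [(h.exp.const_mul c).deriv]
  ring

theorem deriv_deriv_const_mul_exp_add_mul (c γ β y : ℝ) :
    deriv (deriv fun s => c * exp (γ + β * s)) y = β ^ 2 * (c * exp (γ + β * y)) := by
  rw [deriv_const_mul_exp_add_mul, deriv_const_mul_exp_add_mul]
  ring

theorem deriv_deriv_mul_coth_exp {a K b α : ℝ} (C γ : ℝ) (ha : a ≠ 0)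
    (hK : K * α = -(a * b)) {ξ : ℝ} (hξ : ξ ≠ 0) :
    deriv (deriv fun s => C * (K * coth (a * s) + b) * exp (α * s + γ)) ξ
      = (α ^ 2 - 2 * a ^ 2 * (1 - coth (a * ξ) ^ 2))
          * (C * (K * coth (a * ξ) + b) * exp (α * ξ + γ)) := by
  have hexp (s : ℝ) : HasDerivAt (fun s => exp (α * s + γ)) (exp (α * s + γ) * α) s := by
    simpa using (((hasDerivAt_id s).const_mul α).add_const γ).exp
  have hcoth (s : ℝ) (hs : s ≠ 0) := hasDerivAt_coth_const_mul a (mul_ne_zero ha hs)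
  have hderiv : deriv (fun s => C * (K * coth (a * s) + b) * exp (α * s + γ)) =ᶠ[𝓝 ξ]
      fun s => C * (a * K * (1 - coth (a * s) ^ 2) + α * (K * coth (a * s) + b))
        * exp (α * s + γ) := by
    filter_upwards [eventually_ne_nhds hξ] with s hs
    have h : HasDerivAt (fun s => C * (K * coth (a * s) + b) * exp (α * s + γ)) _ s :=
      (((hcoth s hs).const_mul K).add_const b).const_mul C |>.mul (hexp s)
    rw [h.deriv]
    ring
  have hu := hcoth ξ hξ
  have h : HasDerivAt (fun s => C * (a * K * (1 - coth (a * s) ^ 2)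
      + α * (K * coth (a * s) + b)) * exp (α * s + γ)) _ ξ :=
    ((((hu.pow 2).const_sub 1).const_mul (a * K)).add
      (((hu.const_mul K).add_const b).const_mul α)).const_mul C |>.mul (hexp ξ)
  rw [hderiv.deriv_eq, h.deriv]
  simp only [Pi.add_apply, Pi.pow_apply]
  linear_combination (2 * a * C * (1 - coth (a * ξ) ^ 2) * exp (α * ξ + γ)) * hK

noncomputable def cothExpMode (a C K b α β ξ y : ℝ) : ℝ :=
  C * (K * coth (a * ξ) + b) * exp (α * ξ + β * y)

theorem laplacian_cothExpMode {a C K b α β : ℝ} (ha : a ≠ 0) (hK : K * α = -(a * b))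
    (hαβ : α ^ 2 + β ^ 2 = 4 * a ^ 2 / 3) {ξ : ℝ} (hξ : ξ ≠ 0) (y : ℝ) :
    deriv (deriv fun s => cothExpMode a C K b α β s y) ξ
        + deriv (deriv fun s => cothExpMode a C K b α β ξ s) y
      = 2 * a ^ 2 * (coth (a * ξ) ^ 2 - 1 / 3) * cothExpMode a C K b α β ξ y := by
  simp only [cothExpMode]
  rw [deriv_deriv_mul_coth_exp C (β * y) ha hK hξ, deriv_deriv_const_mul_exp_add_mul]
  linear_combination (C * (K * coth (a * ξ) + b) * exp (α * ξ + β * y)) * hαβ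

namespace Case5

noncomputable def scale (p : ℝ) : Fin 3 → ℝ :=
  ![1 / √(3 * (p - 1)), 1 / √(3 * (p - 1)), -(1 / (√3 * p))]

def offset (p : ℝ) : Fin 3 → ℝ := ![1, p - 1, -p]

noncomputable def ξRate (p : ℝ) : Fin 3 → ℝ :=
  ![-(1 / (2 * √(p - 1))), -(√(p - 1) / 2), p / (2 * √(p - 1))]

noncomputable def yRate (p : ℝ) : Fin 3 → ℝ :=
  ![(2 * p - 1) / (2 * √(3 * (p - 1))), -((p + 1) / (2 * √(3 * (p - 1)))),
    -((p - 2) / (2 * √(3 * (p - 1))))]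

theorem r_eq_cothExpMode (p a ξ y : ℝ) (i : Fin 3) :
    r p a ξ y i = cothExpMode a (scale p i) √(p ^ 2 - p + 1) (offset p i) (ξRate p i)
      (yRate p i) ξ y := by
  fin_cases i <;>
    simp only [r, cothExpMode, scale, offset, ξRate, yRate, Fin.zero_eta, Fin.mk_one,
      Fin.reduceFinMk, Matrix.cons_val] <;>
    ring_nf

theorem sqrt_mul_ξRate {p : ℝ} (hp : 1 < p) (i : Fin 3) :
    √(p ^ 2 - p + 1) * ξRate p i = -(√(p ^ 2 - p + 1) / (2 * √(p - 1)) * offset p i) := by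
  have hs : √(p - 1) ^ 2 = p - 1 := sq_sqrt (by linarith)
  have hs0 : √(p - 1) ≠ 0 := (sqrt_pos.mpr (by linarith)).ne'
  fin_cases i <;>
    simp only [ξRate, offset, Fin.zero_eta, Fin.mk_one, Fin.reduceFinMk, Matrix.cons_val]
  · field_simp
  · field_simp
    rw [hs]
    ring
  · field_simp

theorem ξRate_sq_add_yRate_sq {p : ℝ} (hp : 1 < p) (i : Fin 3) :
    ξRate p i ^ 2 + yRate p i ^ 2 = (p ^ 2 - p + 1) / (3 * (p - 1)) := by
  have hp1 : p - 1 ≠ 0 := by linarith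
  fin_cases i <;>
    simp only [ξRate, yRate, Fin.zero_eta, Fin.mk_one, Fin.reduceFinMk, Matrix.cons_val, neg_sq,
      div_pow, mul_pow, sq_sqrt (by linarith : (0 : ℝ) ≤ p - 1),
      sq_sqrt (by linarith : (0 : ℝ) ≤ 3 * (p - 1))] <;>
    field_simp <;> ring

end Case5

/-- Each component satisfies the affine-sphere equation
`Δ r = ((p²−p+1)/(2(p−1))) (coth²(a ξ) − 1/3) r`. -/
theorem case5_affine_sphere_laplace (p : ℝ) (hp : 2 ≤ p)
    (a : ℝ) (ha : a = Real.sqrt (p ^ 2 - p + 1) / (2 * Real.sqrt (p - 1))) :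
    ∀ ξ : ℝ, ξ ≠ 0 → ∀ y : ℝ, ∀ i : Fin 3,
      deriv (deriv fun s => r p a s y i) ξ + deriv (deriv fun s => r p a ξ s i) y
        = ((p ^ 2 - p + 1) / (2 * (p - 1))) * ((coth (a * ξ)) ^ 2 - 1 / 3) * r p a ξ y i := by
  intro ξ hξ y i
  have hp1 : 1 < p := by linarith
  have ha_sq : a ^ 2 = (p ^ 2 - p + 1) / (4 * (p - 1)) := by
    rw [ha, div_pow, mul_pow, sq_sqrt (by nlinarith), sq_sqrt (by linarith)]
    ring
  have ha0 : a ≠ 0 := by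
    rw [ha]
    exact (div_pos (sqrt_pos.2 (by nlinarith)) (mul_pos two_pos (sqrt_pos.2 (by linarith)))).ne'
  have hK := Case5.sqrt_mul_ξRate hp1 i
  rw [← ha] at hK
  have hαβ : Case5.ξRate p i ^ 2 + Case5.yRate p i ^ 2 = 4 * a ^ 2 / 3 := by
    rw [Case5.ξRate_sq_add_yRate_sq hp1, ha_sq]
    field_simp
  have htwo_a_sq : (p ^ 2 - p + 1) / (2 * (p - 1)) = 2 * a ^ 2 := by
    rw [ha_sq]
    field_simp
    ring
  simp only [Case5.r_eq_cothExpMode]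
  rw [htwo_a_sq]
  exact laplacian_cothExpMode ha0 hK hαβ hξ y
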